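/- arXiv:2010.05505 — 3 statements merged into one kernel-verified Lean document; each statement's English description precedes it below -/
import Mathlib

section
/- For all integers m, n ≥ 0 and every real z with 0 ≤ z < 1, one has ∑_{a > m} (z^{a−m}/a)·C(a,n;z) = z · m! n!/(m+n+1)! · F(m+1, n+1; m+n+2; z), where the sum is over integers a > m. -/
/-- The rising factorial (Pochhammer symbol) (a)_n = a(a+1)⋯(a+n−1). -/
noncomputable def risingFactorial (a : ℝ) (n : ℕ) : ℝ := ∏ i ∈ Finset.range n, (a + i)

/-- The Gauss hypergeometric series F(α,β;γ;z) = ∑_{n≥0} (α)_n (β)_n / ((γ)_n n!) · zⁿ. -/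
noncomputable def F (α β γ z : ℝ) : ℝ :=
  ∑' n : ℕ, risingFactorial α n * risingFactorial β n /
    (risingFactorial γ n * (n.factorial : ℝ)) * z ^ n

/-- The connector C(m,n;z) = m! n!/(m+n)! · F(m, n; m+n+1; z). -/
noncomputable def C (m n : ℕ) (z : ℝ) : ℝ :=
  (m.factorial : ℝ) * n.factorial / (m + n).factorial * F m n (m + n + 1) z

/-! Substituting `a = m + 1 + i` and expanding `C a n z` as its hypergeometric series turns the
left side into a double series over `(i, k)` whose term is `w (i + k) * (n)_k / k!`, with
`w s = z^(s+1) (m+s)! n! / (m+n+s+1)!`. Along each diagonal `i + k = s` the hockey-stick identity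
`∑_{k ≤ s} (x)_k / k! = (x+1)_s / s!` collapses the sum to `w s * (n+1)_s / s!`, which is the `s`-th
term of the right side. All terms are nonnegative and the right side converges for `|z| < 1`,
which justifies the rearrangement. -/

open Nat Finset

lemma risingFactorial_eq_eval_ascPochhammer (a : ℝ) (k : ℕ) :
    risingFactorial a k = (ascPochhammer ℝ k).eval a := by
  induction k with
  | zero => simp [risingFactorial]
  | succ k ih => rw [risingFactorial, Finset.prod_range_succ, ← risingFactorial, ih,
      ascPochhammer_succ_eval]

lemma risingFactorial_succ_right (a : ℝ) (k : ℕ) :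
    risingFactorial a (k + 1) = risingFactorial a k * (a + k) := by
  simp only [risingFactorial_eq_eval_ascPochhammer, ascPochhammer_succ_eval]

lemma risingFactorial_succ_left (a : ℝ) (k : ℕ) :
    risingFactorial a (k + 1) = a * risingFactorial (a + 1) k := by
  simp [risingFactorial_eq_eval_ascPochhammer, ascPochhammer_succ_left]

lemma factorial_mul_risingFactorial (b k : ℕ) :
    (b ! : ℝ) * risingFactorial (b + 1) k = (b + k)! := by
  rw [risingFactorial_eq_eval_ascPochhammer, ← Nat.cast_succ,
    ascPochhammer_nat_eq_natCast_ascFactorial, ← Nat.cast_mul, Nat.factorial_mul_ascFactorial]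

lemma risingFactorial_nonneg {a : ℝ} (ha : 0 ≤ a) (k : ℕ) : 0 ≤ risingFactorial a k :=
  Finset.prod_nonneg fun _ _ => by positivity

lemma risingFactorial_natCast_add_one (b k : ℕ) :
    risingFactorial ((b : ℝ) + 1) k = (b + k)! / b ! := by
  rw [eq_div_iff (by positivity), mul_comm, factorial_mul_risingFactorial]

lemma sum_range_risingFactorial_div_factorial (x : ℝ) (s : ℕ) :
    ∑ k ∈ Finset.range (s + 1), risingFactorial x k / k !
      = risingFactorial (x + 1) s / s ! := by
  induction s with
  | zero => simp [risingFactorial]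
  | succ s ih =>
    rw [Finset.sum_range_succ, ih, risingFactorial_succ_left, risingFactorial_succ_right,
      Nat.factorial_succ]
    push_cast
    field_simp
    ring

lemma summable_F_series {α β γ z : ℝ} (hα : 0 < α) (hβ : 0 < β) (hγ : 0 < γ) (hz : |z| < 1) :
    Summable fun n : ℕ => risingFactorial α n * risingFactorial β n /
      (risingFactorial γ n * (n ! : ℝ)) * z ^ n := by
  have hpar : ∀ k : ℕ, (k : ℝ) ≠ -α ∧ (k : ℝ) ≠ -β ∧ (k : ℝ) ≠ -γ := fun k => by
    refine ⟨?_, ?_, ?_⟩ <;> intro h <;> linarith [(k.cast_nonneg : (0 : ℝ) ≤ k)]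
  have hz' : z ∈ Metric.eball (0 : ℝ) (ordinaryHypergeometricSeries ℝ α β γ).radius := by
    rw [ordinaryHypergeometricSeries_radius_eq_one ℝ α β γ hpar]
    simpa [Metric.mem_eball, edist_dist, Real.dist_eq] using hz
  refine ((ordinaryHypergeometricSeries ℝ α β γ).summable_norm_apply hz').of_norm.congr fun n => ?_
  rw [ordinaryHypergeometricSeries_apply_eq]
  simp only [risingFactorial_eq_eval_ascPochhammer, smul_eq_mul]
  ring

lemma tsum_prod_eq_tsum_sum_antidiagonal_of_nonneg {G : ℕ × ℕ → ℝ} (hG : ∀ p, 0 ≤ G p)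
    (h : Summable fun s => ∑ p ∈ antidiagonal s, G p) :
    ∑' i, ∑' k, G (i, k) = ∑' s, ∑ p ∈ antidiagonal s, G p := by
  have hσ : Summable fun x : Σ s : ℕ, antidiagonal s => G x.2 := by
    refine (summable_sigma_of_nonneg fun _ => hG _).2 ⟨fun _ => Summable.of_finite, ?_⟩
    simpa only [Finset.tsum_subtype] using h
  have hprod : Summable G := HasAntidiagonal.sigmaAntidiagonalEquivProd.summable_iff.1 hσ
  calc ∑' i, ∑' k, G (i, k) = ∑' p, G p := hprod.tsum_prod.symm
    _ = ∑' x : Σ s : ℕ, antidiagonal s, G x.2 :=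
      (HasAntidiagonal.sigmaAntidiagonalEquivProd.tsum_eq G).symm
    _ = ∑' s, ∑ p ∈ antidiagonal s, G p := by
      rw [hσ.tsum_sigma]
      simp only [Finset.tsum_subtype]

noncomputable def diagWeight (m n : ℕ) (z : ℝ) (s : ℕ) : ℝ :=
  z ^ (s + 1) * (m + s)! * n ! / (m + n + s + 1)!

lemma diagWeight_nonneg (m n : ℕ) {z : ℝ} (hz : 0 ≤ z) (s : ℕ) : 0 ≤ diagWeight m n z s := by
  unfold diagWeight
  positivity

lemma pow_div_mul_C_eq_tsum (m n i : ℕ) (z : ℝ) :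
    z ^ (i + 1) / (m + i + 1 : ℕ) * C (m + i + 1) n z
      = ∑' k, diagWeight m n z (i + k) * (risingFactorial n k / k !) := by
  unfold C F
  rw [← tsum_mul_left, ← tsum_mul_left]
  refine tsum_congr fun k => ?_
  have hnum : risingFactorial ((m + i + 1 : ℕ) : ℝ) k = (m + i + k)! / (m + i)! := by
    rw [Nat.cast_succ, risingFactorial_natCast_add_one]
  have hden : risingFactorial ((m + i + 1 : ℕ) + n + 1 : ℝ) k
      = (m + n + (i + k) + 1)! / (m + i + 1 + n)! := by
    rw [show ((m + i + 1 : ℕ) + n : ℝ) = (m + i + 1 + n : ℕ) by push_cast; ring,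
      risingFactorial_natCast_add_one, show m + i + 1 + n + k = m + n + (i + k) + 1 by omega]
  have hfact : ((m + i + 1)! : ℝ) = (m + i)! * (m + i + 1 : ℕ) := by
    rw [Nat.factorial_succ]; push_cast; ring
  rw [hnum, hden, hfact, diagWeight, show m + (i + k) = m + i + k by omega]
  field_simp
  ring

lemma sum_antidiagonal_diagWeight (m n : ℕ) (z : ℝ) (s : ℕ) :
    ∑ p ∈ antidiagonal s, diagWeight m n z (p.1 + p.2) * (risingFactorial n p.2 / p.2 !)
      = diagWeight m n z s * (risingFactorial (n + 1) s / s !) := by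
  rw [← sum_range_risingFactorial_div_factorial, Finset.mul_sum,
    ← Finset.Nat.sum_antidiagonal_swap, Finset.Nat.sum_antidiagonal_eq_sum_range_succ_mk]
  refine Finset.sum_congr rfl fun k hk => ?_
  rw [Prod.swap_prod_mk, Nat.sub_add_cancel (Finset.mem_range_succ_iff.1 hk)]

lemma diagWeight_mul_eq_F_term (m n : ℕ) (z : ℝ) (s : ℕ) :
    diagWeight m n z s * (risingFactorial (n + 1) s / s !)
      = z * ((m ! : ℝ) * n ! / (m + n + 1)!) * (risingFactorial (m + 1) s *
        risingFactorial (n + 1) s / (risingFactorial (m + n + 2) s * s !) * z ^ s) := by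
  rw [show (m + n + 2 : ℝ) = (m + n + 1 : ℕ) + 1 by push_cast; ring,
    risingFactorial_natCast_add_one, risingFactorial_natCast_add_one,
    risingFactorial_natCast_add_one, diagWeight, show m + n + 1 + s = m + n + s + 1 by omega]
  field_simp
  ring

lemma tsum_subtype_lt_eq_tsum_add {M : Type*} [AddCommMonoid M] [TopologicalSpace M]
    (f : ℕ → M) (m : ℕ) :
    ∑' a : {a : ℕ // m < a}, f a = ∑' i, f (m + i + 1) := by
  let e : ℕ ≃ {a : ℕ // m < a} :=
    { toFun i := ⟨m + i + 1, by omega⟩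
      invFun a := a - (m + 1)
      left_inv i := by simp only; omega
      right_inv a := Subtype.ext (by simp only; omega) }
  exact (e.tsum_eq _).symm

/-- ∑_{a>m} (z^{a−m}/a)·C(a,n;z) = z · m!n!/(m+n+1)! · F(m+1,n+1;m+n+2;z). -/
theorem connector_sum_eval (m n : ℕ) (z : ℝ) (hz0 : 0 ≤ z) (hz1 : z < 1) :
    ∑' a : {a : ℕ // m < a}, z ^ ((a : ℕ) - m) / (a : ℕ) * C a n z
      = z * ((m.factorial : ℝ) * n.factorial / (m + n + 1).factorial) *
        F (m + 1) (n + 1) (m + n + 2) z := by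
  have hF := summable_F_series (α := m + 1) (β := n + 1) (γ := m + n + 2) (by positivity)
    (by positivity) (by positivity) (abs_lt.2 ⟨by linarith, hz1⟩)
  have hnonneg (p : ℕ × ℕ) :
      0 ≤ diagWeight m n z (p.1 + p.2) * (risingFactorial n p.2 / p.2 !) :=
    mul_nonneg (diagWeight_nonneg m n hz0 _)
      (div_nonneg (risingFactorial_nonneg n.cast_nonneg _) (by positivity))
  rw [tsum_subtype_lt_eq_tsum_add (fun a => z ^ (a - m) / (a : ℝ) * C a n z)]
  calc ∑' i, z ^ (m + i + 1 - m) / (m + i + 1 : ℕ) * C (m + i + 1) n z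
      = ∑' i, ∑' k, diagWeight m n z (i + k) * (risingFactorial n k / k !) :=
        tsum_congr fun i => by rw [show m + i + 1 - m = i + 1 by omega, pow_div_mul_C_eq_tsum]
    _ = ∑' s, diagWeight m n z s * (risingFactorial (n + 1) s / s !) := by
        simp only [← sum_antidiagonal_diagWeight]
        refine tsum_prod_eq_tsum_sum_antidiagonal_of_nonneg hnonneg ?_
        simpa only [sum_antidiagonal_diagWeight, diagWeight_mul_eq_F_term] using hF.mul_left _
    _ = _ := by simp only [diagWeight_mul_eq_F_term, tsum_mul_left, F]
end

section
/- Let z be real with 0 ≤ z < 1 and let k̃ = ((k_1,μ_1),…,(k_r,μ_r)) and l̃ = ((l_1,ν_1),…,(l_s,ν_s)) be augmented indices. Then the connected sum satisfies the transport relation L̃i(w(k̃)y_0; w(l̃); z) = L̃i(w(k̃); w(l̃)y_0; z), i.e. appending the letter y_0 (that is, appending the augmented entry (1,0)) to the first index gives the same value as appending it to the second index. -/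
open scoped ENNReal

/-- An augmented index: a tuple of pairs (k_i, μ_i) with μ_i ∈ {0,1};
`true` encodes μ = 1 and `false` encodes μ = 0. -/
abbrev AugIndex := List (ℕ × Bool)

/-- All exponents k_i of the augmented index are positive integers. -/
def AugIndex.Valid (K : AugIndex) : Prop := ∀ p ∈ K, 1 ≤ p.1

/-- An augmented index is admissible if it is empty or its last entry is not (1,1). -/
def AugIndex.Admissible (K : AugIndex) : Prop := K.getLast? ≠ some (1, true)

/-- The strictly increasing chain 0 = m_0 < m_1 < ⋯ < m_r encoded by gaps `d`:
m_i = (d_0 + 1) + ⋯ + (d_{i-1} + 1). -/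
def chain {r : ℕ} (d : Fin r → ℕ) (i : ℕ) : ℕ :=
  ∑ j ∈ Finset.univ.filter (fun j : Fin r => (j : ℕ) < i), (d j + 1)

/-- The factor (μ_i + (−1)^{μ_i} z^{m_i − m_{i−1}}) / m_i^{k_i}. -/
noncomputable def termFactor (z : ℝ) (k : ℕ) (μ : Bool) (mprev mcur : ℕ) : ℝ :=
  ((if μ then 1 else 0) + (if μ then -1 else 1) * z ^ (mcur - mprev)) / (mcur : ℝ) ^ k

/-- The connected sum L̃i(k̃; l̃; z), a well-defined sum of nonnegative terms in [0,∞]. -/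
noncomputable def connSum (K L : AugIndex) (z : ℝ) : ℝ≥0∞ :=
  ∑' p : (Fin K.length → ℕ) × (Fin L.length → ℕ),
    ENNReal.ofReal
      ((∏ i : Fin K.length,
          termFactor z (K.get i).1 (K.get i).2 (chain p.1 i.val) (chain p.1 (i.val + 1))) *
       (∏ j : Fin L.length,
          termFactor z (L.get j).1 (L.get j).2 (chain p.2 j.val) (chain p.2 (j.val + 1))) *
       C (chain p.1 K.length) (chain p.2 L.length) z)

/-- Appending the letter x to the word w(k̃): increase the last exponent k_r by 1. -/
def incLast : AugIndex → AugIndex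
  | [] => []
  | [p] => [(p.1 + 1, p.2)]
  | p :: q :: ps => p :: incLast (q :: ps)

/-!
Appending `y₀` to the second index adds a last gap `g` weighted by `z^(g+1)/(n+g+1)`, `n` being
the current top of the second chain. Expanding `C(m, n+g+1; z)` as its series in `j` and summing
along the diagonals `g + j = p`, the hockey-stick identity `∑_{j ≤ p} m! (m)_j / j! = (m+p)!/p!`
turns `∑_g z^(g+1)/(n+g+1) · C(m, n+g+1; z)` into
`∑_p z^(p+1) (m+p)! (n+p)! / ((m+n+p+1)! p!)`, which is symmetric in `m` and `n`. As `C` is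
symmetric as well, appending `y₀` to either index gives the same sum.
-/

open Finset Nat

lemma risingFactorial_natCast (n k : ℕ) : risingFactorial n k = n.ascFactorial k := by
  simp [risingFactorial, Nat.ascFactorial_eq_prod_range]

-- `(m + n)! · (m + n + 1)_j = (m + n + j)!` absorbs the prefactor of `C` into each term.
noncomputable def connectorTerm (m n : ℕ) (z : ℝ) (j : ℕ) : ℝ :=
  ((m ! * n ! * m.ascFactorial j * n.ascFactorial j : ℕ) : ℝ) / ((m + n + j)! * j ! : ℕ) *
    z ^ j

lemma connectorTerm_nonneg (m n : ℕ) {z : ℝ} (hz : 0 ≤ z) (j : ℕ) :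
    0 ≤ connectorTerm m n z j := by
  unfold connectorTerm
  positivity

lemma Nat.factorial_mul_ascFactorial_le (n j : ℕ) : n ! * n.ascFactorial j ≤ (n + j)! :=
  factorial_mul_ascFactorial n j ▸ Nat.mul_le_mul_left _ (ascFactorial_le _ (le_succ _))

lemma connectorTerm_le_choose_mul_pow (m n : ℕ) {z : ℝ} (hz : 0 ≤ z) (j : ℕ) :
    connectorTerm m n z j ≤ (j + m).choose m * z ^ j := by
  unfold connectorTerm
  gcongr
  rw [div_le_iff₀ (by positivity)]
  norm_cast
  calc m ! * n ! * m.ascFactorial j * n.ascFactorial j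
      = m.ascFactorial j * (m ! * (n ! * n.ascFactorial j)) := by ring
    _ ≤ (m + 1).ascFactorial j * (m ! * (n + j)!) := by
      gcongr
      · exact le_succ m
      · exact factorial_mul_ascFactorial_le n j
    _ ≤ (j ! * (j + m).choose m) * (m + n + j)! := by
      gcongr
      · rw [ascFactorial_eq_factorial_mul_choose, add_comm j m, choose_symm_add]
      · rw [add_assoc]
        exact le_of_dvd (factorial_pos _) (factorial_mul_factorial_dvd_factorial_add _ _)
    _ = (j + m).choose m * ((m + n + j)! * j !) := by ring

lemma hasSum_connectorTerm (m n : ℕ) {z : ℝ} (hz0 : 0 ≤ z) (hz1 : z < 1) :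
    HasSum (connectorTerm m n z) (C m n z) := by
  have hsum : Summable (connectorTerm m n z) :=
    (summable_choose_mul_geometric_of_norm_lt_one m
      (by rwa [Real.norm_of_nonneg hz0])).of_nonneg_of_le
        (connectorTerm_nonneg m n hz0) (connectorTerm_le_choose_mul_pow m n hz0)
  convert hsum.hasSum using 1
  rw [C, F, ← tsum_mul_left]
  congr 1
  funext j
  have hcast : (m : ℝ) + n + 1 = ((m + n + 1 : ℕ) : ℝ) := by push_cast; ring
  have hfac : ((m + n)! * (m + n + 1).ascFactorial j : ℝ) = (m + n + j)! := by
    exact_mod_cast factorial_mul_ascFactorial (m + n) j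
  rw [hcast, risingFactorial_natCast, risingFactorial_natCast, risingFactorial_natCast,
    connectorTerm, Nat.cast_mul ((m + n + j)!), ← hfac]
  push_cast
  field_simp

lemma ENNReal.tsum_prod_mul_add (f g : ℕ → ℝ≥0∞) :
    ∑' x : ℕ × ℕ, f x.1 * g (x.1 + x.2) = ∑' p, (∑ j ∈ range (p + 1), f j) * g p := by
  rw [← HasAntidiagonal.sigmaAntidiagonalEquivProd.tsum_eq, ENNReal.tsum_sigma']
  congr 1
  funext p
  simp only [HasAntidiagonal.sigmaAntidiagonalEquivProd_apply]
  rw [Finset.tsum_subtype (antidiagonal p) fun x => f x.1 * g (x.1 + x.2),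
    Nat.sum_antidiagonal_eq_sum_range_succ_mk, Finset.sum_mul]
  refine Finset.sum_congr rfl fun j hj => ?_
  rw [Nat.add_sub_cancel' (Nat.lt_succ_iff.mp (mem_range.mp hj))]

lemma sum_range_factorial_mul_ascFactorial_div (m p : ℕ) :
    ∑ j ∈ range (p + 1), (m ! * m.ascFactorial j : ℝ) / j ! = (m + p)! / p ! := by
  induction p with
  | zero => simp
  | succ p ih =>
    have hstep : (m ! * m.ascFactorial (p + 1) : ℝ) = m * (m + p)! := by
      exact_mod_cast by
        rw [ascFactorial_succ, ← succ_ascFactorial, mul_left_comm, factorial_mul_ascFactorial]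
    rw [sum_range_succ, ih, hstep, ← add_assoc, factorial_succ (m + p), factorial_succ p]
    push_cast
    field_simp
    ring

noncomputable def transportKernel (z : ℝ) (m n : ℕ) : ℝ≥0∞ :=
  ∑' p, ENNReal.ofReal
    (z ^ (p + 1) * ((m + p)! * (n + p)! : ℕ) / ((m + n + p + 1)! * p ! : ℕ))

lemma transportKernel_comm (z : ℝ) (m n : ℕ) :
    transportKernel z m n = transportKernel z n m := by
  simp only [transportKernel, add_comm m n, mul_comm (m + _)!]

lemma termFactor_one_false (z : ℝ) (a b : ℕ) :
    termFactor z 1 false a (a + b) = z ^ b / (a + b : ℕ) := by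
  simp [termFactor]

lemma termFactor_mul_connectorTerm (z : ℝ) (m n g j : ℕ) :
    termFactor z 1 false n (n + (g + 1)) * connectorTerm m (n + (g + 1)) z j =
      (m ! * m.ascFactorial j : ℝ) / j ! *
        (z ^ (j + g + 1) * (n + (j + g))! / (m + n + (j + g) + 1)!) := by
  have hfac : ((n + g)! * (n + g + 1).ascFactorial j : ℝ) = (n + (j + g))! := by
    exact_mod_cast (factorial_mul_ascFactorial (n + g) j).trans (by rw [add_comm j g, add_assoc])
  rw [termFactor_one_false, connectorTerm, ← hfac, show n + (g + 1) = n + g + 1 by ring,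
    show m + (n + g + 1) + j = m + n + (j + g) + 1 by ring, factorial_succ (n + g)]
  push_cast
  field_simp
  ring

lemma tsum_termFactor_mul_C {z : ℝ} (hz0 : 0 ≤ z) (hz1 : z < 1) (m n : ℕ) :
    ∑' g, ENNReal.ofReal (termFactor z 1 false n (n + (g + 1)) * C m (n + (g + 1)) z) =
      transportKernel z m n := by
  set u : ℕ → ℝ := fun j => (m ! * m.ascFactorial j : ℝ) / (j ! : ℝ)
  set v : ℕ → ℝ := fun q => z ^ (q + 1) * (n + q)! / (m + n + q + 1)!
  have hexpand : ∀ g,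
      ENNReal.ofReal (termFactor z 1 false n (n + (g + 1)) * C m (n + (g + 1)) z) =
        ∑' j, ENNReal.ofReal (u j) * ENNReal.ofReal (v (j + g)) := by
    intro g
    have hsum := (hasSum_connectorTerm m (n + (g + 1)) hz0 hz1).mul_left
      (termFactor z 1 false n (n + (g + 1)))
    rw [← hsum.tsum_eq, ENNReal.ofReal_tsum_of_nonneg _ hsum.summable]
    · simp only [termFactor_mul_connectorTerm, u, v]
      congr 1
      funext j
      rw [ENNReal.ofReal_mul (by positivity)]
    · intro j
      rw [termFactor_one_false]
      have := connectorTerm_nonneg m (n + (g + 1)) hz0 j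
      positivity
  calc _ = ∑' g, ∑' j, ENNReal.ofReal (u j) * ENNReal.ofReal (v (j + g)) :=
        tsum_congr hexpand
    _ = ∑' x : ℕ × ℕ, ENNReal.ofReal (u x.1) * ENNReal.ofReal (v (x.1 + x.2)) := by
        rw [ENNReal.tsum_comm, ENNReal.tsum_prod']
    _ = ∑' p, (∑ j ∈ range (p + 1), ENNReal.ofReal (u j)) * ENNReal.ofReal (v p) :=
        ENNReal.tsum_prod_mul_add (fun j => ENNReal.ofReal (u j)) fun q => ENNReal.ofReal (v q)
    _ = transportKernel z m n := by
        refine tsum_congr fun p => ?_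
        rw [← ENNReal.ofReal_sum_of_nonneg fun j _ => by positivity,
          sum_range_factorial_mul_ascFactorial_div, ← ENNReal.ofReal_mul (by positivity)]
        congr 1
        simp only [v]
        push_cast
        field_simp

lemma termFactor_nonneg {z : ℝ} (hz0 : 0 ≤ z) (hz1 : z < 1) (k : ℕ) (μ : Bool) (a b : ℕ) :
    0 ≤ termFactor z k μ a b := by
  unfold termFactor
  cases μ
  · simp only [Bool.false_eq_true, ite_false, zero_add, one_mul]
    positivity
  · simp only [ite_true, neg_one_mul, ← sub_eq_add_neg]
    exact div_nonneg (sub_nonneg.mpr (pow_le_one₀ hz0 hz1.le)) (by positivity)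

lemma C_comm (m n : ℕ) (z : ℝ) : C m n z = C n m z := by
  simp only [C, F, add_comm m n, add_comm (m : ℝ) n, mul_comm (m ! : ℝ),
    mul_comm (risingFactorial m _)]

/-- Defined for gap sequences of any length `r`, so that the summation type of `connSum` can be
rewritten along `(L ++ [x]).length = L.length + 1`. -/
noncomputable def indexWeight (z : ℝ) (A : AugIndex) {r : ℕ} (d : Fin r → ℕ) : ℝ :=
  ∏ i : Fin r, termFactor z (A.getD i (0, false)).1 (A.getD i (0, false)).2
    (chain d i) (chain d (i + 1))

lemma indexWeight_nonneg {z : ℝ} (hz0 : 0 ≤ z) (hz1 : z < 1) (A : AugIndex) {r : ℕ}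
    (d : Fin r → ℕ) : 0 ≤ indexWeight z A d :=
  prod_nonneg fun _ _ => termFactor_nonneg hz0 hz1 ..

lemma connSum_eq_tsum_indexWeight (K L : AugIndex) (z : ℝ) :
    connSum K L z = ∑' p : (Fin K.length → ℕ) × (Fin L.length → ℕ),
      ENNReal.ofReal (indexWeight z K p.1 * indexWeight z L p.2 *
        C (chain p.1 K.length) (chain p.2 L.length) z) := by
  simp [connSum, indexWeight]

lemma connSum_comm (K L : AugIndex) (z : ℝ) : connSum K L z = connSum L K z := by
  rw [connSum_eq_tsum_indexWeight, connSum_eq_tsum_indexWeight, ← (Equiv.prodComm _ _).tsum_eq]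
  refine tsum_congr fun p => ?_
  rw [Equiv.prodComm_apply, Prod.fst_swap, Prod.snd_swap, C_comm, mul_comm (indexWeight z K _)]

lemma chain_snoc_of_le {n : ℕ} (d : Fin n → ℕ) (g : ℕ) {i : ℕ} (hi : i ≤ n) :
    chain (Fin.snoc d g : Fin (n + 1) → ℕ) i = chain d i := by
  simp [chain, sum_filter, Fin.sum_univ_castSucc, show ¬ n < i by omega]

lemma chain_snoc_last {n : ℕ} (d : Fin n → ℕ) (g : ℕ) :
    chain (Fin.snoc d g : Fin (n + 1) → ℕ) (n + 1) = chain d n + (g + 1) := by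
  simp [chain, sum_filter, Fin.sum_univ_castSucc]

lemma indexWeight_append_snoc (z : ℝ) (A : AugIndex) (x : ℕ × Bool) (d : Fin A.length → ℕ)
    (g : ℕ) :
    indexWeight z (A ++ [x]) (Fin.snoc d g : Fin (A.length + 1) → ℕ) =
      indexWeight z A d *
        termFactor z x.1 x.2 (chain d A.length) (chain d A.length + (g + 1)) := by
  rw [indexWeight, Fin.prod_univ_castSucc]
  congr 1
  · refine prod_congr rfl fun i _ => ?_
    simp only [Fin.val_castSucc, List.getD_append _ _ _ _ i.isLt,
      chain_snoc_of_le d g i.isLt.le, chain_snoc_of_le d g i.isLt]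
  · simp only [Fin.val_last, List.getD_append_right _ _ _ _ le_rfl, Nat.sub_self,
      chain_snoc_of_le d g le_rfl, chain_snoc_last]
    rfl

lemma connSum_append_singleton {z : ℝ} (hz0 : 0 ≤ z) (hz1 : z < 1) (K L : AugIndex)
    (x : ℕ × Bool) :
    connSum K (L ++ [x]) z = ∑' q : (Fin K.length → ℕ) × (Fin L.length → ℕ),
      ENNReal.ofReal (indexWeight z K q.1 * indexWeight z L q.2) *
        ∑' g, ENNReal.ofReal
          (termFactor z x.1 x.2 (chain q.2 L.length) (chain q.2 L.length + (g + 1)) *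
            C (chain q.1 K.length) (chain q.2 L.length + (g + 1)) z) := by
  rw [connSum_eq_tsum_indexWeight, List.length_append, List.length_singleton,
    ← (Equiv.prodCongr (Equiv.refl _) (Fin.snocEquiv fun _ => ℕ)).tsum_eq,
    ENNReal.tsum_prod', ENNReal.tsum_prod']
  refine tsum_congr fun d => ?_
  rw [ENNReal.tsum_prod', ENNReal.tsum_comm]
  refine tsum_congr fun e => ?_
  rw [← ENNReal.tsum_mul_left]
  refine tsum_congr fun g => ?_
  have hsnoc : (Fin.snocEquiv fun _ => ℕ) (g, e) = Fin.snoc e g := rfl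
  simp only [Equiv.prodCongr_apply, Equiv.coe_refl, Prod.map_apply, id_eq, hsnoc,
    indexWeight_append_snoc, chain_snoc_last]
  rw [← ENNReal.ofReal_mul (mul_nonneg (indexWeight_nonneg hz0 hz1 K d)
    (indexWeight_nonneg hz0 hz1 L e))]
  congr 1
  ring

theorem transport_y0_general (z : ℝ) (hz0 : 0 ≤ z) (hz1 : z < 1) (K L : AugIndex) :
    connSum (K ++ [(1, false)]) L z = connSum K (L ++ [(1, false)]) z := by
  rw [connSum_comm, connSum_append_singleton hz0 hz1, connSum_append_singleton hz0 hz1,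
    ← (Equiv.prodComm _ _).tsum_eq]
  refine tsum_congr fun q => ?_
  simp only [tsum_termFactor_mul_C hz0 hz1, Equiv.prodComm_apply, Prod.fst_swap, Prod.snd_swap]
  rw [transportKernel_comm, mul_comm (indexWeight z L _)]

/-- Transport relation: L̃i(w(k̃)y₀; w(l̃); z) = L̃i(w(k̃); w(l̃)y₀; z), i.e. appending the
augmented entry (1,0) to the first index equals appending it to the second index. -/
theorem transport_y0 (z : ℝ) (hz0 : 0 ≤ z) (hz1 : z < 1) (K L : AugIndex)
    (hK : K.Valid) (hL : L.Valid) :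
    connSum (K ++ [(1, false)]) L z = connSum K (L ++ [(1, false)]) z :=
  transport_y0_general z hz0 hz1 K L
end

section
/- Let 0 < q < 1, let α, β, γ be complex numbers with 1 − q^k γ ≠ 0 for all integers k ≥ 0, and let z be complex with |z| < 1. Then the q-hypergeometric series satisfies the contiguous relation (α−γ)·φ_q(α,β;qγ;z) = (1−γ)α·φ_q(α,β;γ;z) − (1−α)γ·φ_q(qα,β;qγ;z). -/
/-- The q-shifted factorial (a;q)_n = (1−a)(1−qa)⋯(1−q^{n−1}a). -/
noncomputable def qPoch (q a : ℂ) (n : ℕ) : ℂ := ∏ i ∈ Finset.range n, (1 - q ^ i * a)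

/-- The q-hypergeometric series φ_q(α,β;γ;z) = ∑_{n≥0} (α;q)_n (β;q)_n / ((γ;q)_n (q;q)_n) · zⁿ. -/
noncomputable def qHyp (q α β γ z : ℂ) : ℂ :=
  ∑' n : ℕ, qPoch q α n * qPoch q β n / (qPoch q γ n * qPoch q q n) * z ^ n

/-!
Writing `tₙ` for the `n`-th term of `φ_q(α,β;qγ;z)`, the identities
`(1 - γ) (qγ;q)ₙ = (γ;q)ₙ (1 - qⁿγ)` and `(1 - α) (qα;q)ₙ = (α;q)ₙ (1 - qⁿα)` turn the `n`-th term
of the right-hand side into `(α (1 - qⁿγ) - γ (1 - qⁿα)) tₙ = (α - γ) tₙ`, so the relation holds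
term by term. All three series converge by the ratio test: the ratio of consecutive terms tends
to `z`, because `qⁿ → 0`.
-/

open Filter Topology

theorem summable_of_succ_eq_smul {𝕜 E : Type*} [NormedField 𝕜] [NormedAddCommGroup E]
    [NormedSpace 𝕜 E] [CompleteSpace E] {f : ℕ → E} {c : ℕ → 𝕜} {l : 𝕜}
    (hf : ∀ n, f (n + 1) = c n • f n) (hc : Tendsto c atTop (𝓝 l)) (hl : ‖l‖ < 1) :
    Summable f := by
  obtain ⟨r, hlr, hr1⟩ := exists_between hl
  refine summable_of_ratio_norm_eventually_le hr1 ?_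
  filter_upwards [hc.norm.eventually (gt_mem_nhds hlr)] with n hn
  rw [hf, norm_smul]
  exact mul_le_mul_of_nonneg_right hn.le (norm_nonneg _)

section QPoch

variable (q a : ℂ) (n : ℕ)

theorem qPoch_succ : qPoch q a (n + 1) = qPoch q a n * (1 - q ^ n * a) :=
  Finset.prod_range_succ _ _

theorem qPoch_succ' : qPoch q a (n + 1) = (1 - a) * qPoch q (q * a) n := by
  rw [qPoch, Finset.prod_range_succ', pow_zero, one_mul, mul_comm]
  congr 1
  exact Finset.prod_congr rfl fun i _ => by ring

variable {q a} in
theorem qPoch_ne_zero (h : ∀ k : ℕ, 1 - q ^ k * a ≠ 0) : qPoch q a n ≠ 0 :=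
  Finset.prod_ne_zero_iff.2 fun i _ => h i

end QPoch

section QHypTerm

noncomputable def qHypTerm (q α β γ z : ℂ) (n : ℕ) : ℂ :=
  qPoch q α n * qPoch q β n / (qPoch q γ n * qPoch q q n) * z ^ n

variable (q α β γ z : ℂ)

theorem qHyp_eq_tsum_qHypTerm : qHyp q α β γ z = ∑' n, qHypTerm q α β γ z n := rfl

theorem qHypTerm_succ (n : ℕ) :
    qHypTerm q α β γ z (n + 1) =
      (1 - q ^ n * α) * (1 - q ^ n * β) / ((1 - q ^ n * γ) * (1 - q ^ n * q)) * z *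
        qHypTerm q α β γ z n := by
  rw [qHypTerm, qHypTerm, qPoch_succ, qPoch_succ, qPoch_succ, qPoch_succ, pow_succ]
  simp only [div_eq_mul_inv, mul_inv]
  ring

theorem tendsto_qHypTerm_ratio {q : ℂ} (hq : ‖q‖ < 1) :
    Tendsto (fun n : ℕ => (1 - q ^ n * α) * (1 - q ^ n * β) /
      ((1 - q ^ n * γ) * (1 - q ^ n * q)) * z) atTop (𝓝 z) := by
  have hpow : Tendsto (fun n : ℕ => q ^ n) atTop (𝓝 0) :=
    tendsto_pow_atTop_nhds_zero_of_norm_lt_one hq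
  have hfactor (a : ℂ) : Tendsto (fun n : ℕ => 1 - q ^ n * a) atTop (𝓝 1) := by
    simpa using tendsto_const_nhds.sub (hpow.mul_const a)
  simpa using (((hfactor α).mul (hfactor β)).div ((hfactor γ).mul (hfactor q))
    (by norm_num)).mul_const z

variable {q α β γ z} in
theorem summable_qHypTerm (hq : ‖q‖ < 1) (hz : ‖z‖ < 1) : Summable (qHypTerm q α β γ z) :=
  summable_of_succ_eq_smul (qHypTerm_succ q α β γ z) (tendsto_qHypTerm_ratio α β γ z hq) hz

variable {q γ} in
theorem qHypTerm_contiguous (hγ : ∀ k : ℕ, 1 - q ^ k * γ ≠ 0) (n : ℕ) :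
    (α - γ) * qHypTerm q α β (q * γ) z n =
      (1 - γ) * α * qHypTerm q α β γ z n - (1 - α) * γ * qHypTerm q (q * α) β (q * γ) z n := by
  have hqγ : ∀ k : ℕ, 1 - q ^ k * (q * γ) ≠ 0 := fun k => by
    simpa only [pow_succ, mul_assoc] using hγ (k + 1)
  have hC := qPoch_ne_zero n hγ
  have hC' := qPoch_ne_zero n hqγ
  have hγ_shift : (1 - γ) / qPoch q γ n = (1 - q ^ n * γ) / qPoch q (q * γ) n := by
    rw [div_eq_div_iff hC hC', ← qPoch_succ', qPoch_succ, mul_comm]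
  have hα_shift : (1 - α) * qPoch q (q * α) n = qPoch q α n * (1 - q ^ n * α) := by
    rw [← qPoch_succ', qPoch_succ]
  simp only [qHypTerm]
  linear_combination
    (-(α * qPoch q α n * qPoch q β n * z ^ n / qPoch q q n)) * hγ_shift
    + (γ * qPoch q β n * z ^ n / (qPoch q (q * γ) n * qPoch q q n)) * hα_shift

end QHypTerm

/-- Contiguous relation: (α−γ)·φ_q(α,β;qγ;z) = (1−γ)α·φ_q(α,β;γ;z) − (1−α)γ·φ_q(qα,β;qγ;z). -/
theorem qHyp_contiguous_two (q : ℝ) (hq0 : 0 < q) (hq1 : q < 1) (α β γ z : ℂ)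
    (hγ : ∀ k : ℕ, (1 : ℂ) - (q : ℂ) ^ k * γ ≠ 0) (hz : ‖z‖ < 1) :
    (α - γ) * qHyp q α β (q * γ) z
      = (1 - γ) * α * qHyp q α β γ z - (1 - α) * γ * qHyp q (q * α) β (q * γ) z := by
  have hq : ‖(q : ℂ)‖ < 1 := by
    rwa [Complex.norm_real, Real.norm_of_nonneg hq0.le]
  simp only [qHyp_eq_tsum_qHypTerm]
  rw [← tsum_mul_left, ← tsum_mul_left, ← tsum_mul_left,
    ← ((summable_qHypTerm hq hz).mul_left _).tsum_sub ((summable_qHypTerm hq hz).mul_left _)]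
  exact tsum_congr (qHypTerm_contiguous α β z hγ)
end
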